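/- arXiv:1212.6973 — 2 statements merged into one kernel-verified Lean document; each statement's English description precedes it below -/
import Mathlib

section
/- For every real v₀ ≥ 0, every real v ≥ 0, and every integer n ≥ 3, one has v²·c_n ≥ c₆·v₀² + 2·v₀·c₆·(v − v₀) + κ·v₀²·(n − 6), where c_n = (1/(2n))·(tan(π/n)/3 + cot(π/n)), c₆ = 5√3/54, and κ = 2π/243 − 5√3/324. -/
open MeasureTheory Real Filter
open scoped ENNReal RealInnerProductSpace

noncomputable section

/-- The plane `ℝ²`. -/
abbrev Plane := EuclideanSpace ℝ (Fin 2)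

/-- The point `(a, b)` of the plane. -/
def mk2 (a b : ℝ) : Plane := (WithLp.equiv 2 (Fin 2 → ℝ)).symm ![a, b]

/-- The constant `c₆ = 5√3/54`. -/
def c6 : ℝ := 5 * Real.sqrt 3 / 54

/-- The volume `V_λ = (2c₆/λ)^(2/3)` of the scaled domain. -/
def Vlam (lam : ℝ) : ℝ := (2 * c6 / lam) ^ ((2 : ℝ) / 3)

/-- The scaled domain `Ω_λ = V_λ^(1/2)·Ω`. -/
def scaledDomain (lam : ℝ) (Omega : Set Plane) : Set Plane :=
  (fun x : Plane => Real.sqrt (Vlam lam) • x) '' Omega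

/-- An admissible atomic measure on `Ω_λ`, encoded by its finite support `Z ⊆ Ω_λ` and
its weights `v`, which are positive on `Z` and of total mass `V_λ`. -/
def Admissible (lam : ℝ) (Omlam : Set Plane) (Z : Finset Plane) (v : Plane → ℝ) : Prop :=
  (↑Z : Set Plane) ⊆ Omlam ∧ (∀ z ∈ Z, 0 < v z) ∧ ∑ z ∈ Z, v z = Vlam lam

/-- A transport map between the Lebesgue measure on `Ω_λ` and the atomic measure `(Z, v)`:
a measurable map `T : Ω_λ → Z` with `|T⁻¹({z})| = v z` for all `z ∈ Z`. -/
def IsTransportMap (Omlam : Set Plane) (Z : Finset Plane) (v : Plane → ℝ)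
    (T : Plane → Plane) : Prop :=
  Measurable T ∧ (∀ x ∈ Omlam, T x ∈ Z) ∧
    ∀ z ∈ Z, (volume {x | x ∈ Omlam ∧ T x = z}).toReal = v z

/-- The quadratic optimal transport cost `W(L_{Ω_λ}, μ)`. -/
def transportCost (Omlam : Set Plane) (Z : Finset Plane) (v : Plane → ℝ) : ℝ :=
  sInf {c : ℝ | ∃ T : Plane → Plane, IsTransportMap Omlam Z v T ∧
    c = ∫ x in Omlam, ‖x - T x‖ ^ 2}

/-- The energy `E_λ(μ) = 2c₆ Σ_z v_z^(1/2) + W(L_{Ω_λ}, μ)`. -/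
def energy (Omlam : Set Plane) (Z : Finset Plane) (v : Plane → ℝ) : ℝ :=
  2 * c6 * ∑ z ∈ Z, Real.sqrt (v z) + transportCost Omlam Z v

/-- A convex polygon with at most `n` sides: a compact set with nonempty interior which is an
intersection of at most `n` closed half-planes. -/
def IsConvexPolygon (P : Set Plane) (n : ℕ) : Prop :=
  IsCompact P ∧ (interior P).Nonempty ∧
    ∃ H : Finset (Plane × ℝ), H.card ≤ n ∧ (∀ h ∈ H, h.1 ≠ 0) ∧
      P = {x : Plane | ∀ h ∈ H, ⟪h.1, x⟫ ≤ h.2}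

/-- The constant `c_n = (1/(2n))·(tan(π/n)/3 + cot(π/n))`. -/
def cPoly (n : ℕ) : ℝ := (1 / (2 * (n : ℝ))) * (Real.tan (π / n) / 3 + Real.cot (π / n))

/-- The constant `κ = 2π/243 − 5√3/324 = ∂c_n/∂n |_{n=6} < 0`. -/
def kappa : ℝ := 2 * π / 243 - 5 * Real.sqrt 3 / 324

/-! By AM–GM, `2 c₆ v₀ v ≤ c_n v² + (c₆ - κ (n - 6)) v₀²` once `c₆² ≤ c_n (c₆ - κ (n - 6))`, and this
rearranges to the claim. That numerical inequality says that `1 / c_n` lies below its tangent line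
at `n = 6`. It is an equality at `n = 6`; for `n < 15` it follows from the Taylor bounds
`sin x ≤ x - x³/6 + x⁵/120` and `cos x ≤ 1 - x²/2 + x⁴/24` at `x = π / n` (the relative margin is
only about `0.2 %` at `n = 7`); for `n ≥ 15` the crude bounds `sin x ≤ x`, `cos x ≤ 1` suffice,
because `n sin (π / n) cos (π / n) ≤ π` stays bounded while `c₆ - κ (n - 6)` grows linearly. -/

lemma cos_le_taylor_four (x : ℝ) : cos x ≤ 1 - x ^ 2 / 2 + x ^ 4 / 24 := by
  suffices h : ∀ y, 0 ≤ y → cos y ≤ 1 - y ^ 2 / 2 + y ^ 4 / 24 by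
    simpa only [cos_abs, Even.pow_abs even_two, Even.pow_abs (by decide : Even 4)] using
      h |x| (abs_nonneg x)
  have hderiv (y : ℝ) : HasDerivAt (fun y => 1 - y ^ 2 / 2 + y ^ 4 / 24 - cos y)
      (sin y - (y - y ^ 3 / 6)) y := by
    refine (((((hasDerivAt_pow 2 y).div_const 2).const_sub 1).add
      ((hasDerivAt_pow 4 y).div_const 24)).sub (hasDerivAt_cos y)).congr_deriv ?_
    ring
  have hmono : MonotoneOn (fun y => 1 - y ^ 2 / 2 + y ^ 4 / 24 - cos y) (Set.Ici 0) := by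
    refine monotoneOn_of_hasDerivWithinAt_nonneg (convex_Ici 0) (by fun_prop)
      (fun y _ => (hderiv y).hasDerivWithinAt) fun y hy => ?_
    rw [interior_Ici] at hy
    exact sub_nonneg.2 (sin_ge_sub_cube hy.le)
  intro y hy
  have := hmono Set.self_mem_Ici hy hy
  simp only [cos_zero] at this
  linarith

lemma sin_le_taylor_five {x : ℝ} (hx : 0 ≤ x) : sin x ≤ x - x ^ 3 / 6 + x ^ 5 / 120 := by
  have hderiv (y : ℝ) : HasDerivAt (fun y => y - y ^ 3 / 6 + y ^ 5 / 120 - sin y)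
      (1 - y ^ 2 / 2 + y ^ 4 / 24 - cos y) y := by
    refine ((((hasDerivAt_id y).sub ((hasDerivAt_pow 3 y).div_const 6)).add
      ((hasDerivAt_pow 5 y).div_const 120)).sub (hasDerivAt_sin y)).congr_deriv ?_
    ring
  have := monotone_of_hasDerivAt_nonneg hderiv (fun y => sub_nonneg.2 (cos_le_taylor_four y)) hx
  simp only [sin_zero] at this
  linarith

lemma sin_le_taylor_five_of_le {x a : ℝ} (hx : 0 ≤ x) (hxa : x ≤ a) (ha : a ≤ π / 2) :
    sin x ≤ a - a ^ 3 / 6 + a ^ 5 / 120 :=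
  (sin_le_sin_of_le_of_le_pi_div_two (by linarith [pi_pos]) ha hxa).trans
    (sin_le_taylor_five (hx.trans hxa))

lemma cos_le_taylor_four_of_le {x b : ℝ} (hb : 0 ≤ b) (hbx : b ≤ x) (hx : x ≤ π) :
    cos x ≤ 1 - b ^ 2 / 2 + b ^ 4 / 24 :=
  (cos_le_cos_of_nonneg_of_le_pi hb hx hbx).trans (cos_le_taylor_four b)

lemma c6_sq : c6 ^ 2 = 25 / 972 := by
  rw [c6, div_pow, mul_pow, sq_sqrt (by norm_num : (0 : ℝ) ≤ 3)]
  norm_num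

lemma c6_add_six_mul_kappa : c6 + 6 * kappa = 4 * π / 81 := by
  rw [c6, kappa]
  ring

lemma kappa_le : kappa ≤ -0.00087242 := by
  have h3 : 1.7320508 ≤ √3 := by
    rw [le_sqrt (by norm_num) (by norm_num)]
    norm_num
  rw [kappa]
  linarith [pi_lt_d6]

lemma le_c6_sub_kappa_mul {t : ℝ} (ht : 0 ≤ t) :
    0.15514 + 0.00087242 * t ≤ c6 - kappa * (t - 6) := by
  have h : c6 - kappa * (t - 6) = 4 * π / 81 + (-kappa) * t := by
    linear_combination c6_add_six_mul_kappa
  have hκ : 0.00087242 * t ≤ (-kappa) * t :=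
    mul_le_mul_of_nonneg_right (by linarith [kappa_le]) ht
  rw [h]
  linarith [pi_gt_d6]

section PiDivNat

variable {n : ℕ}

lemma sin_pi_div_natCast_pos (hn : 2 ≤ n) : 0 < sin (π / n) := by
  have hn' : (2 : ℝ) ≤ n := by exact_mod_cast hn
  apply sin_pos_of_pos_of_lt_pi (by positivity)
  rw [div_lt_iff₀ (by positivity)]
  nlinarith [pi_pos]

lemma cos_pi_div_natCast_pos (hn : 3 ≤ n) : 0 < cos (π / n) := by
  have hn' : (3 : ℝ) ≤ n := by exact_mod_cast hn
  have hx : 0 < π / n := by positivity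
  apply cos_pos_of_mem_Ioo ⟨by linarith [pi_pos], ?_⟩
  rw [div_lt_iff₀ (by positivity)]
  nlinarith [pi_pos]

lemma cPoly_eq_div (hn : 3 ≤ n) :
    cPoly n = (3 - 2 * sin (π / n) ^ 2) / (6 * n * sin (π / n) * cos (π / n)) := by
  have hs := (sin_pi_div_natCast_pos (by omega : 2 ≤ n)).ne'
  have hc := (cos_pi_div_natCast_pos hn).ne'
  have hn0 : (n : ℝ) ≠ 0 := by positivity
  rw [cPoly, tan_eq_sin_div_cos, cot_eq_cos_div_sin]
  field_simp
  linear_combination 18 * sin_sq_add_cos_sq (π / n)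

lemma cPoly_pos (hn : 3 ≤ n) : 0 < cPoly n := by
  have hs := sin_pi_div_natCast_pos (by omega : 2 ≤ n)
  have hc := cos_pi_div_natCast_pos hn
  have hnum : 0 < 3 - 2 * sin (π / n) ^ 2 := by nlinarith [sin_sq_le_one (π / n)]
  rw [cPoly_eq_div hn]
  positivity

lemma cPoly_six : cPoly 6 = c6 := by
  rw [cPoly_eq_div (by norm_num), Nat.cast_ofNat, sin_pi_div_six, cos_pi_div_six, c6]
  have h3 : √3 ^ 2 = 3 := sq_sqrt (by norm_num)
  field_simp
  linear_combination -180 * h3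

lemma c6_sq_le_cPoly_mul_of_sin_cos_le (hn : 3 ≤ n) {s c : ℝ} (hs : sin (π / n) ≤ s)
    (hc : cos (π / n) ≤ c)
    (h : 25 / 162 * n * (s * c) ≤ (3 - 2 * s ^ 2) * (0.15514 + 0.00087242 * n)) :
    c6 ^ 2 ≤ cPoly n * (c6 - kappa * (n - 6)) := by
  have hS := sin_pi_div_natCast_pos (by omega : 2 ≤ n)
  have hC := cos_pi_div_natCast_pos hn
  rw [cPoly_eq_div hn, div_mul_eq_mul_div, le_div_iff₀ (by positivity), c6_sq]
  calc 25 / 972 * (6 * n * sin (π / n) * cos (π / n))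
      = 25 / 162 * n * (sin (π / n) * cos (π / n)) := by ring
    _ ≤ 25 / 162 * n * (s * c) := by gcongr; exact hS.le.trans hs
    _ ≤ (3 - 2 * s ^ 2) * (0.15514 + 0.00087242 * n) := h
    _ ≤ (3 - 2 * sin (π / n) ^ 2) * (c6 - kappa * (n - 6)) := by
      refine mul_le_mul (by gcongr) (le_c6_sub_kappa_mul n.cast_nonneg) (by positivity) ?_
      nlinarith [sin_sq_le_one (π / n)]

lemma c6_sq_le_cPoly_mul_of_lt_fifteen (hn : 3 ≤ n) (hn15 : n < 15) (hn6 : n ≠ 6) :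
    c6 ^ 2 ≤ cPoly n * (c6 - kappa * (n - 6)) := by
  have hn' : (3 : ℝ) ≤ n := by exact_mod_cast hn
  have hs := sin_le_taylor_five_of_le (a := 3.141593 / n) (by positivity)
    (div_le_div_of_nonneg_right pi_lt_d6.le n.cast_nonneg) (by
      rw [div_le_iff₀ (by positivity)]
      nlinarith [pi_gt_d6])
  have hc := cos_le_taylor_four_of_le (b := 3.141592 / n) (by positivity)
    (div_le_div_of_nonneg_right pi_gt_d6.le n.cast_nonneg) (div_le_self pi_pos.le (by linarith))
  refine c6_sq_le_cPoly_mul_of_sin_cos_le hn hs hc ?_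
  interval_cases n <;> first | contradiction | norm_num

lemma c6_sq_le_cPoly_mul_of_fifteen_le (hn : 15 ≤ n) :
    c6 ^ 2 ≤ cPoly n * (c6 - kappa * (n - 6)) := by
  have hn' : (15 : ℝ) ≤ n := by exact_mod_cast hn
  refine c6_sq_le_cPoly_mul_of_sin_cos_le (by omega) (sin_le (by positivity)) (cos_le_one _) ?_
  have hx : π / n ≤ 0.21 := by
    rw [div_le_iff₀ (by positivity)]
    nlinarith [pi_lt_d6]
  have hx2 : (π / n) ^ 2 ≤ 0.21 ^ 2 := pow_le_pow_left₀ (by positivity) hx 2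
  have hpos : 0 ≤ 3 - 2 * (π / n) ^ 2 := by linarith
  calc 25 / 162 * n * (π / n * 1) = 25 / 162 * π := by field_simp
    _ ≤ (3 - 2 * 0.21 ^ 2) * (0.15514 + 0.00087242 * 15) := by linarith [pi_lt_d6]
    _ ≤ (3 - 2 * (π / n) ^ 2) * (0.15514 + 0.00087242 * n) := by gcongr

lemma c6_sq_le_cPoly_mul (hn : 3 ≤ n) : c6 ^ 2 ≤ cPoly n * (c6 - kappa * (n - 6)) := by
  rcases eq_or_ne n 6 with rfl | hn6
  · rw [cPoly_six]
    norm_num [sq]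
  rcases lt_or_ge n 15 with hn15 | hn15
  · exact c6_sq_le_cPoly_mul_of_lt_fifteen hn hn15 hn6
  · exact c6_sq_le_cPoly_mul_of_fifteen_le hn15

end PiDivNat

lemma two_mul_mul_le_of_sq_le_mul {a b m : ℝ} (ha : 0 < a) (h : b ^ 2 ≤ a * m) (u w : ℝ) :
    2 * b * u * w ≤ a * w ^ 2 + m * u ^ 2 := by
  nlinarith [sq_nonneg (a * w - b * u), mul_nonneg (sub_nonneg.2 h) (sq_nonneg u)]

theorem tangent_plane_inequality_general (v0 v : ℝ) (n : ℕ) (hn : 3 ≤ n) :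
    c6 * v0 ^ 2 + 2 * v0 * c6 * (v - v0) + kappa * v0 ^ 2 * ((n : ℝ) - 6) ≤
      v ^ 2 * cPoly n := by
  have hamgm := two_mul_mul_le_of_sq_le_mul (cPoly_pos hn) (c6_sq_le_cPoly_mul hn) v0 v
  linear_combination hamgm

/-- **The supporting tangent-plane inequality.** For all reals `v₀, v ≥ 0` and every integer
`n ≥ 3`, `v²·c_n ≥ c₆·v₀² + 2v₀c₆(v − v₀) + κ·v₀²·(n − 6)`. -/
theorem tangent_plane_inequality (v0 v : ℝ) (hv0 : 0 ≤ v0) (hv : 0 ≤ v)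
    (n : ℕ) (hn : 3 ≤ n) :
    c6 * v0 ^ 2 + 2 * v0 * c6 * (v - v0) + kappa * v0 ^ 2 * ((n : ℝ) - 6) ≤
      v ^ 2 * cPoly n :=
  tangent_plane_inequality_general v0 v n hn
end
end

section
/- Let λ > 0 and let Ω ⊂ ℝ² be a bounded open set with Lebesgue area 1. Then the infimum of E_λ(μ) over admissible atomic measures μ on Ω_λ equals the infimum of F_λ(𝝌) over finite measurable partitions 𝝌 of Ω_λ; that is, inf_μ E_λ(μ) = inf_𝝌 Σ_{i=1}^{n} [ 2·c₆·(∫_{Ω_λ} χ_i dx)^{1/2} + inf_{ξ ∈ Ω_λ} ∫_{Ω_λ} |x − ξ|²·χ_i(x) dx ]. -/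
open MeasureTheory Real Filter
open scoped ENNReal RealInnerProductSpace

noncomputable section

/-- The infimum of the energy `E_λ` over admissible atomic measures on `Ω_λ`. -/
def infEnergy (lam : ℝ) (Omlam : Set Plane) : ℝ :=
  sInf {e : ℝ | ∃ (Z : Finset Plane) (v : Plane → ℝ),
    Admissible lam Omlam Z v ∧ e = energy Omlam Z v}

/-!
A transport map `T` for an admissible `μ` cuts `Ω_λ` into the fibres `T⁻¹{z}`, and charging each
fibre to its own atom `z` shows that this partition has energy at most `E_λ(μ)`. Conversely, given a
partition, place one atom near an optimal centre of each piece of positive area and send the piece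
to it; pieces sharing an atom are merged, which only lowers `Σ √v` since the square root is
subadditive. Transport maps exist for every admissible `μ` because `Ω_λ` can be cut into pieces of
any prescribed areas, by balls about the origin: the area of `Ω_λ` inside a ball varies
continuously with the radius.
-/

open scoped Pointwise
open Bornology Metric Set

section AEPartition

variable {α ι : Type*} [MeasurableSpace α] [Fintype ι] {μ : Measure α} {S : Set α}
  {s : ι → Set α}

theorem setIntegral_eq_sum_of_ae_existsUnique {E : Type*} [NormedAddCommGroup E]
    [NormedSpace ℝ E] (hs : ∀ i, MeasurableSet (s i)) (hae : ∀ᵐ x ∂μ.restrict S, ∃! i, x ∈ s i)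
    {f : α → E} (hf : IntegrableOn f S μ) :
    ∫ x in S, f x ∂μ = ∑ i, ∫ x in s i ∩ S, f x ∂μ := by
  have hsum : ∀ᵐ x ∂μ.restrict S, f x = ∑ i, (s i).indicator f x := by
    filter_upwards [hae] with x ⟨i, hi, huniq⟩
    rw [Finset.sum_eq_single_of_mem i (Finset.mem_univ i)
      fun j _ hji => indicator_of_notMem (fun hj => hji (huniq j hj)) f, indicator_of_mem hi]
  rw [integral_congr_ae hsum, integral_finsetSum _ fun i _ => hf.indicator (hs i)]
  refine Finset.sum_congr rfl fun i _ => ?_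
  rw [integral_indicator (hs i), Measure.restrict_restrict (hs i)]

theorem measureReal_eq_sum_of_ae_existsUnique (hs : ∀ i, MeasurableSet (s i))
    (hae : ∀ᵐ x ∂μ.restrict S, ∃! i, x ∈ s i) (hS : μ S ≠ ⊤) :
    μ.real S = ∑ i, μ.real (s i ∩ S) := by
  simpa using setIntegral_eq_sum_of_ae_existsUnique hs hae (integrableOn_const (C := (1 : ℝ)) hS)

theorem measureReal_fiber_eq_sum {β : Type*} [DecidableEq β] (hSfin : μ S ≠ ⊤)
    (hs : ∀ i, MeasurableSet (s i)) (hae : ∀ᵐ x ∂μ.restrict S, ∃! i, x ∈ s i)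
    {T : α → β} {ξ : ι → β}
    (hTξ : ∀ i, ∀ᵐ x ∂μ, x ∈ s i ∩ S → T x = ξ i) (z : β) :
    μ.real {x | x ∈ S ∧ T x = z} = ∑ i with ξ i = z, μ.real (s i ∩ S) := by
  have hAS : {x | x ∈ S ∧ T x = z} ⊆ S := fun x hx => hx.1
  rw [measureReal_eq_sum_of_ae_existsUnique hs (ae_restrict_of_ae_restrict_of_subset hAS hae)
    (ne_top_of_le_ne_top hSfin (measure_mono hAS)), Finset.sum_filter]
  refine Finset.sum_congr rfl fun i _ => ?_
  split_ifs with hξ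
  · refine measureReal_congr ?_
    filter_upwards [hTξ i] with x hx
    exact propext ⟨fun h => ⟨h.1, h.2.1⟩, fun h => ⟨h.1, h.2, (hx h).trans hξ⟩⟩
  · rw [measureReal_def, measure_eq_zero_iff_ae_notMem.2 ?_, ENNReal.toReal_zero]
    filter_upwards [hTξ i] with x hx h
    exact hξ ((hx ⟨h.1, h.2.1⟩).symm.trans h.2.2)

end AEPartition

section StepMap

variable {α β ι : Type*} [AddCommMonoid β]

def stepMap (I : Finset ι) (u : ι → Set α) (p : ι → β) (x : α) : β :=
  ∑ i ∈ I, (u i).indicator (fun _ => p i) x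

theorem stepMap_apply_of_mem {I : Finset ι} {u : ι → Set α} (p : ι → β) {i : ι} {x : α}
    (hi : i ∈ I) (hx : x ∈ u i) (huniq : ∀ j ∈ I, x ∈ u j → j = i) : stepMap I u p x = p i := by
  rw [stepMap, Finset.sum_eq_single_of_mem i hi
    fun j hj hji => indicator_of_notMem (fun hxj => hji (huniq j hj hxj)) _, indicator_of_mem hx]

theorem measurable_stepMap [MeasurableSpace α] [MeasurableSpace β] [MeasurableAdd₂ β]
    {I : Finset ι} {u : ι → Set α} (hu : ∀ i ∈ I, MeasurableSet (u i)) (p : ι → β) :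
    Measurable (stepMap I u p) :=
  Finset.measurable_sum I fun i hi => measurable_const.indicator (hu i hi)

theorem exists_measurable_ae_eq_of_ae_existsUnique [Fintype ι] [MeasurableSpace α]
    [MeasurableSpace β] [MeasurableAdd₂ β] [MeasurableSingletonClass β] {μ : Measure α}
    {S : Set α} {s : ι → Set α} (hS : MeasurableSet S) (hs : ∀ i, MeasurableSet (s i))
    (hae : ∀ᵐ x ∂μ.restrict S, ∃! i, x ∈ s i) (ξ : ι → β) {Z : Finset β} (hZ : Z.Nonempty)
    (hξZ : ∀ i, μ (s i ∩ S) ≠ 0 → ξ i ∈ Z) :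
    ∃ T : α → β, Measurable T ∧ (∀ x, T x ∈ Z) ∧ ∀ i, ∀ᵐ x ∂μ, x ∈ s i ∩ S → T x = ξ i := by
  classical
  obtain ⟨z₀, hz₀⟩ := hZ
  -- at points lying in several pieces the step map may leave `Z`; there it is replaced by `z₀`
  have hT₀ := measurable_stepMap (I := Finset.univ) (fun i _ => hs i) ξ
  refine ⟨fun x => if stepMap Finset.univ s ξ x ∈ Z then stepMap Finset.univ s ξ x else z₀,
    Measurable.ite (hT₀ Z.measurableSet) hT₀ measurable_const, fun x => ?_, fun i => ?_⟩
  · dsimp only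
    split_ifs with h
    exacts [h, hz₀]
  by_cases hi : μ (s i ∩ S) = 0
  · filter_upwards [measure_eq_zero_iff_ae_notMem.1 hi] with x hx hx' using absurd hx' hx
  · filter_upwards [(ae_restrict_iff' hS).1 hae] with x hx ⟨hxi, hxS⟩
    have h : stepMap Finset.univ s ξ x = ξ i :=
      stepMap_apply_of_mem ξ (Finset.mem_univ i) hxi fun j _ hj => (hx hxS).unique hj hxi
    simp only [h, hξZ i hi, if_true]

end StepMap

section Splitting

variable {E : Type*} [NormedAddCommGroup E] [NormedSpace ℝ E] [MeasurableSpace E] [BorelSpace E]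
  [FiniteDimensional ℝ E] [Nontrivial E] (μ : Measure E) [μ.IsAddHaarMeasure]

theorem continuous_measureReal_closedBall_inter {S : Set E} (hS : μ S ≠ ⊤) :
    Continuous fun r : ℝ => μ.real (closedBall 0 r ∩ S) := by
  have : IsFiniteMeasure (μ.restrict S) := isFiniteMeasure_restrict.2 hS
  have heq : (fun r : ℝ => μ.real (closedBall 0 r ∩ S)) =
      fun r => ∫ x, (closedBall (0 : E) r).indicator 1 x ∂μ.restrict S := by
    funext r
    rw [integral_indicator_one measurableSet_closedBall,
      measureReal_restrict_apply measurableSet_closedBall]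
  rw [heq, continuous_iff_continuousAt]
  intro r₀
  refine continuousAt_of_dominated (bound := fun _ => 1)
    (Eventually.of_forall fun r => (aestronglyMeasurable_const.indicator measurableSet_closedBall))
    (Eventually.of_forall fun r => Eventually.of_forall fun x => ?_) (integrable_const 1) ?_
  · by_cases hx : x ∈ closedBall (0 : E) r <;> simp [hx]
  -- the integrand jumps only on the sphere of radius `r₀`, which is null
  filter_upwards [ae_restrict_of_ae (measure_eq_zero_iff_ae_notMem.1 (μ.addHaar_sphere 0 r₀))]
    with x hx
  rw [mem_sphere_zero_iff_norm] at hx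
  rcases lt_or_gt_of_ne hx with h | h
  · refine continuousAt_const.congr (f := fun _ => (1 : ℝ)) ?_
    filter_upwards [lt_mem_nhds h] with r hr
    simp [mem_closedBall_zero_iff.2 hr.le]
  · refine continuousAt_const.congr (f := fun _ => (0 : ℝ)) ?_
    filter_upwards [gt_mem_nhds h] with r hr
    simp [hr]

theorem exists_subset_measure_eq {S : Set E} (hS : MeasurableSet S) (hSb : IsBounded S)
    {c : ℝ≥0∞} (hc : c ≤ μ S) : ∃ U ⊆ S, MeasurableSet U ∧ μ U = c := by
  have hSfin : μ S ≠ ⊤ := hSb.measure_lt_top.ne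
  obtain ⟨R, hR⟩ := hSb.subset_closedBall 0
  set R' := max R 0
  have h0 : μ.real (closedBall 0 0 ∩ S) = 0 := by
    rw [closedBall_zero, measureReal_def,
      measure_mono_null inter_subset_left (measure_singleton 0), ENNReal.toReal_zero]
  have hR' : μ.real (closedBall 0 R' ∩ S) = μ.real S := by
    rw [inter_eq_right.2 (hR.trans (closedBall_subset_closedBall (le_max_left R 0)))]
  obtain ⟨r, -, hr⟩ := intermediate_value_Icc (le_max_right R 0)
    (continuous_measureReal_closedBall_inter μ hSfin).continuousOn
    (show c.toReal ∈ Icc (μ.real (closedBall 0 0 ∩ S)) (μ.real (closedBall 0 R' ∩ S)) by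
      rw [h0, hR']
      exact ⟨ENNReal.toReal_nonneg, ENNReal.toReal_mono hSfin hc⟩)
  refine ⟨closedBall 0 r ∩ S, inter_subset_right, measurableSet_closedBall.inter hS, ?_⟩
  exact (ENNReal.toReal_eq_toReal_iff' (ne_top_of_le_ne_top hSfin
    (measure_mono inter_subset_right)) (ne_top_of_le_ne_top hSfin hc)).1 hr

theorem exists_pairwiseDisjoint_measure_eq {ι : Type*} {I : Finset ι} (hI : I.Nonempty)
    (w : ι → ℝ≥0∞) {S : Set E} (hS : MeasurableSet S) (hSb : IsBounded S)
    (hw : ∑ i ∈ I, w i = μ S) :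
    ∃ u : ι → Set E, (∀ i ∈ I, MeasurableSet (u i)) ∧ (∀ i ∈ I, μ (u i) = w i) ∧
      (I : Set ι).PairwiseDisjoint u ∧ ⋃ i ∈ I, u i = S := by
  classical
  induction hI using Finset.Nonempty.cons_induction generalizing S with
  | singleton a =>
    refine ⟨fun _ => S, by simpa using hS, by simpa using hw.symm, by simp, by simp⟩
  | cons a I ha hI ih =>
    rw [Finset.sum_cons] at hw
    have hSfin : μ S ≠ ⊤ := hSb.measure_lt_top.ne
    obtain ⟨U, hUS, hU, hUa⟩ := exists_subset_measure_eq μ hS hSb (hw ▸ le_self_add)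
    have hUfin : μ U ≠ ⊤ := ne_top_of_le_ne_top hSfin (measure_mono hUS)
    obtain ⟨u, hum, huw, hud, huS⟩ := ih (hS.diff hU) (hSb.subset sdiff_subset) (by
      rw [measure_sdiff hUS hU.nullMeasurableSet hUfin, ← hw, hUa,
        ENNReal.add_sub_cancel_left (hUa ▸ hUfin)])
    have hupd : ∀ i ∈ I, Function.update u a U i = u i :=
      fun i hi => Function.update_of_ne (ne_of_mem_of_not_mem hi ha) _ _
    refine ⟨Function.update u a U, ?_, ?_, ?_, ?_⟩
    · rw [Finset.forall_mem_cons, Function.update_self]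
      exact ⟨hU, fun i hi => hupd i hi ▸ hum i hi⟩
    · rw [Finset.forall_mem_cons, Function.update_self]
      exact ⟨hUa, fun i hi => hupd i hi ▸ huw i hi⟩
    · rw [Finset.coe_cons, pairwiseDisjoint_insert]
      refine ⟨fun i hi j hj hij => ?_, fun j hj _ => ?_⟩
      · simpa only [Function.onFun, hupd i hi, hupd j hj] using hud hi hj hij
      · rw [Function.update_self, hupd j hj]
        exact disjoint_sdiff_right.mono_right (huS ▸ Finset.subset_set_biUnion_of_mem hj)
    · rw [Finset.cons_eq_insert, Finset.set_biUnion_insert, Function.update_self,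
        iUnion₂_congr hupd, huS, union_sdiff_cancel hUS]

end Splitting

theorem sqrt_sum_le_sum_sqrt {ι : Type*} (I : Finset ι) {f : ι → ℝ} (hf : ∀ i ∈ I, 0 ≤ f i) :
    √(∑ i ∈ I, f i) ≤ ∑ i ∈ I, √(f i) := by
  refine Finset.le_sum_of_subadditive_on_pred Real.sqrt (0 ≤ ·) (by simp)
    (fun x y hx hy => Real.sqrt_le_iff.2 ⟨by positivity, ?_⟩) (fun _ _ => add_nonneg) f hf
  nlinarith [Real.sq_sqrt hx, Real.sq_sqrt hy, Real.sqrt_nonneg x, Real.sqrt_nonneg y]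

theorem sum_sqrt_sum_fiberwise_le_sum_sqrt {ι κ : Type*} [Fintype ι] [DecidableEq κ]
    (t : Finset κ) (g : ι → κ) {f : ι → ℝ} (hf : ∀ i, 0 ≤ f i) :
    ∑ j ∈ t, √(∑ i with g i = j, f i) ≤ ∑ i, √(f i) :=
  calc ∑ j ∈ t, √(∑ i with g i = j, f i) ≤ ∑ j ∈ t, ∑ i with g i = j, √(f i) :=
        Finset.sum_le_sum fun _ _ => sqrt_sum_le_sum_sqrt _ fun i _ => hf i
    _ = ∑ i with g i ∈ t, √(f i) := Finset.sum_fiberwise_eq_sum_filter _ _ _ _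
    _ ≤ ∑ i, √(f i) := Finset.sum_le_sum_of_subset_of_nonneg (Finset.filter_subset _ _)
        fun _ _ _ => Real.sqrt_nonneg _

theorem integrableOn_norm_sub_sq {E : Type*} [NormedAddCommGroup E] [MeasurableSpace E]
    [BorelSpace E] [SecondCountableTopology E] {μ : Measure E} {S : Set E} (hS : MeasurableSet S)
    (hSb : IsBounded S) (hSfin : μ S ≠ ⊤) {g : E → E} (hg : Measurable g)
    (hgS : ∀ x ∈ S, g x ∈ S) : IntegrableOn (fun x => ‖x - g x‖ ^ 2) S μ := by
  obtain ⟨R, hR⟩ := hSb.subset_closedBall 0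
  refine Measure.integrableOn_of_bounded (M := (R + R) ^ 2) hSfin
    ((measurable_id.sub hg).norm.pow_const 2).aestronglyMeasurable ?_
  filter_upwards [ae_restrict_mem hS] with x hx
  have hxR := mem_closedBall_zero_iff.1 (hR hx)
  have hgR := mem_closedBall_zero_iff.1 (hR (hgS x hx))
  rw [norm_pow, norm_norm]
  exact pow_le_pow_left₀ (norm_nonneg _) ((norm_sub_le _ _).trans (add_le_add hxR hgR)) 2

theorem c6_pos : 0 < c6 := by
  unfold c6
  positivity

theorem Vlam_pos {lam : ℝ} (hlam : 0 < lam) : 0 < Vlam lam :=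
  Real.rpow_pos_of_pos (div_pos (mul_pos two_pos c6_pos) hlam) _

theorem scaledDomain_eq_smul (lam : ℝ) (Omega : Set Plane) :
    scaledDomain lam Omega = √(Vlam lam) • Omega :=
  image_smul

theorem volume_scaledDomain {lam : ℝ} (hlam : 0 < lam) {Omega : Set Plane}
    (harea : volume Omega = 1) :
    volume (scaledDomain lam Omega) = ENNReal.ofReal (Vlam lam) := by
  rw [scaledDomain_eq_smul, Measure.addHaar_smul, finrank_euclideanSpace_fin, harea, mul_one,
    abs_sq, Real.sq_sqrt (Vlam_pos hlam).le]

theorem isOpen_scaledDomain {lam : ℝ} (hlam : 0 < lam) {Omega : Set Plane} (hopen : IsOpen Omega) :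
    IsOpen (scaledDomain lam Omega) :=
  scaledDomain_eq_smul lam Omega ▸ hopen.smul₀ (Real.sqrt_pos.2 (Vlam_pos hlam)).ne'

theorem isBounded_scaledDomain (lam : ℝ) {Omega : Set Plane} (hbdd : IsBounded Omega) :
    IsBounded (scaledDomain lam Omega) :=
  scaledDomain_eq_smul lam Omega ▸ hbdd.smul₀ _

-- `I_{Ω_λ}(χ)` for `χ` the indicator of `A`
def inertia (Om A : Set Plane) : ℝ :=
  sInf {I : ℝ | ∃ xi ∈ Om, I = ∫ x in A, ‖x - xi‖ ^ 2}

theorem inertia_nonneg (Om A : Set Plane) : 0 ≤ inertia Om A :=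
  Real.sInf_nonneg fun _ ⟨_, _, hI⟩ => hI ▸ integral_nonneg fun _ => by positivity

theorem inertia_le {Om : Set Plane} (A : Set Plane) {xi : Plane} (hxi : xi ∈ Om) :
    inertia Om A ≤ ∫ x in A, ‖x - xi‖ ^ 2 :=
  csInf_le ⟨0, fun _ ⟨_, _, hI⟩ => hI ▸ integral_nonneg fun _ => by positivity⟩ ⟨xi, hxi, rfl⟩

theorem exists_lt_inertia_add {Om : Set Plane} (hOm : Om.Nonempty) (A : Set Plane) {δ : ℝ}
    (hδ : 0 < δ) : ∃ xi ∈ Om, ∫ x in A, ‖x - xi‖ ^ 2 < inertia Om A + δ := by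
  obtain ⟨_, ⟨xi, hxi, rfl⟩, h⟩ := Real.lt_sInf_add_pos
    (s := {I : ℝ | ∃ xi ∈ Om, I = ∫ x in A, ‖x - xi‖ ^ 2}) ⟨_, hOm.some, hOm.some_mem, rfl⟩ hδ
  exact ⟨xi, hxi, h⟩

def partitionEnergy (Om : Set Plane) {ι : Type*} [Fintype ι] (s : ι → Set Plane) : ℝ :=
  ∑ i, (2 * c6 * √((volume (s i ∩ Om)).toReal) + inertia Om (s i ∩ Om))

def partitionEnergies (Om : Set Plane) : Set ℝ :=
  {e : ℝ | ∃ (n : ℕ) (s : Fin n → Set Plane), (∀ i, MeasurableSet (s i)) ∧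
    (∀ᵐ x ∂(volume.restrict Om), ∃! i, x ∈ s i) ∧ e = partitionEnergy Om s}

theorem partitionEnergy_nonneg (Om : Set Plane) {ι : Type*} [Fintype ι] (s : ι → Set Plane) :
    0 ≤ partitionEnergy Om s :=
  Finset.sum_nonneg fun i _ => add_nonneg (by have := c6_pos; positivity) (inertia_nonneg _ _)

theorem bddBelow_partitionEnergies (Om : Set Plane) : BddBelow (partitionEnergies Om) :=
  ⟨0, fun _ ⟨_, _, _, _, he⟩ => he ▸ partitionEnergy_nonneg _ _⟩

theorem partitionEnergy_mem_partitionEnergies {Om : Set Plane} {ι : Type*} [Fintype ι]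
    {s : ι → Set Plane} (hs : ∀ i, MeasurableSet (s i))
    (hae : ∀ᵐ x ∂(volume.restrict Om), ∃! i, x ∈ s i) :
    partitionEnergy Om s ∈ partitionEnergies Om := by
  let e := Fintype.equivFin ι
  refine ⟨Fintype.card ι, s ∘ e.symm, fun i => hs _, ?_, (Equiv.sum_comp e.symm _).symm⟩
  filter_upwards [hae] with x ⟨i, hi, huniq⟩
  exact ⟨e i, by simpa using hi, fun j hj => e.symm_apply_eq.1 (huniq _ hj)⟩

theorem transportCost_le {Om : Set Plane} {Z : Finset Plane} {v : Plane → ℝ} {T : Plane → Plane}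
    (hT : IsTransportMap Om Z v T) : transportCost Om Z v ≤ ∫ x in Om, ‖x - T x‖ ^ 2 :=
  csInf_le ⟨0, fun _ ⟨_, _, hc⟩ => hc ▸ integral_nonneg fun _ => by positivity⟩ ⟨T, hT, rfl⟩

theorem energy_nonneg (Om : Set Plane) (Z : Finset Plane) (v : Plane → ℝ) :
    0 ≤ energy Om Z v :=
  add_nonneg (by have := c6_pos; positivity)
    (Real.sInf_nonneg fun _ ⟨_, _, hc⟩ => hc ▸ integral_nonneg fun _ => by positivity)

section Bounds

variable {lam : ℝ} {Om : Set Plane} (hOm : MeasurableSet Om) (hb : IsBounded Om)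
  (hvol : volume Om = ENNReal.ofReal (Vlam lam)) (hV : 0 < Vlam lam)
include hOm hb hvol hV

theorem exists_isTransportMap {Z : Finset Plane} {v : Plane → ℝ} (hadm : Admissible lam Om Z v) :
    ∃ T, IsTransportMap Om Z v T := by
  obtain ⟨-, hvpos, hvsum⟩ := hadm
  have hZ : Z.Nonempty := Finset.nonempty_of_sum_ne_zero (hvsum ▸ hV.ne')
  obtain ⟨u, hum, huv, hud, huOm⟩ := exists_pairwiseDisjoint_measure_eq volume hZ
    (fun z => ENNReal.ofReal (v z)) hOm hb
    (by rw [← ENNReal.ofReal_sum_of_nonneg fun z hz => (hvpos z hz).le, hvsum, hvol])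
  have hTu : ∀ z ∈ Z, ∀ x ∈ u z, stepMap Z u id x = z := fun z hz x hx =>
    stepMap_apply_of_mem id hz hx fun y hy hxy => hud.elim_set hy hz x hxy hx
  have hfiber : ∀ z ∈ Z, {x | x ∈ Om ∧ stepMap Z u id x = z} = u z := by
    intro z hz
    ext x
    refine ⟨fun ⟨hx, hTx⟩ => ?_, fun hx => ⟨huOm ▸ mem_biUnion hz hx, hTu z hz x hx⟩⟩
    obtain ⟨y, hy, hxy⟩ := mem_iUnion₂.1 (huOm ▸ hx : x ∈ ⋃ y ∈ Z, u y)
    rwa [← hTx, hTu y hy x hxy]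
  refine ⟨stepMap Z u id, measurable_stepMap hum id, fun x hx => ?_, fun z hz => ?_⟩
  · obtain ⟨y, hy, hxy⟩ := mem_iUnion₂.1 (huOm ▸ hx : x ∈ ⋃ y ∈ Z, u y)
    exact hTu y hy x hxy ▸ hy
  · rw [hfiber z hz, huv z hz, ENNReal.toReal_ofReal (hvpos z hz).le]

theorem sInf_partitionEnergies_le_energy {Z : Finset Plane} {v : Plane → ℝ}
    (hadm : Admissible lam Om Z v) : sInf (partitionEnergies Om) ≤ energy Om Z v := by
  suffices h : ∀ T, IsTransportMap Om Z v T →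
      sInf (partitionEnergies Om) - 2 * c6 * ∑ z ∈ Z, √(v z) ≤ ∫ x in Om, ‖x - T x‖ ^ 2 by
    obtain ⟨T, hT⟩ := exists_isTransportMap hOm hb hvol hV hadm
    have : sInf (partitionEnergies Om) - 2 * c6 * ∑ z ∈ Z, √(v z) ≤ transportCost Om Z v :=
      le_csInf ⟨_, T, hT, rfl⟩ fun c ⟨T, hT, hc⟩ => hc ▸ h T hT
    rw [energy]
    linarith
  rintro T ⟨hTm, hTZ, hTv⟩
  let s : Z → Set Plane := fun z => T ⁻¹' {(z : Plane)}
  have hs : ∀ z, MeasurableSet (s z) := fun z => hTm (measurableSet_singleton _)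
  have hsOm : ∀ z : Z, s z ∩ Om = {x | x ∈ Om ∧ T x = z} := fun z => ext fun x => and_comm
  have hae : ∀ᵐ x ∂volume.restrict Om, ∃! z : Z, x ∈ s z :=
    (ae_restrict_iff' hOm).2 (Eventually.of_forall fun x hx =>
      ⟨⟨T x, hTZ x hx⟩, rfl, fun z hz => Subtype.ext (hz : T x = z).symm⟩)
  have hpiece : ∀ z : Z, inertia Om (s z ∩ Om) ≤ ∫ x in s z ∩ Om, ‖x - T x‖ ^ 2 := fun z =>
    (inertia_le _ (hadm.1 z.2)).trans_eq
      (setIntegral_congr_fun ((hs z).inter hOm) fun x hx => by rw [(hx.1 : T x = z)])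
  have hcost := setIntegral_eq_sum_of_ae_existsUnique hs hae (integrableOn_norm_sub_sq hOm hb
    (hvol ▸ ENNReal.ofReal_ne_top) hTm fun x hx => hadm.1 (hTZ x hx))
  have hsqrt : ∑ z ∈ Z, √(v z) = ∑ z : Z, √((volume (s z ∩ Om)).toReal) := by
    rw [← Finset.sum_coe_sort Z]
    exact Finset.sum_congr rfl fun z _ => by rw [hsOm z, hTv z z.2]
  rw [hsqrt, hcost, Finset.mul_sum, sub_le_iff_le_add', ← Finset.sum_add_distrib]
  exact (csInf_le (bddBelow_partitionEnergies Om)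
    (partitionEnergy_mem_partitionEnergies hs hae)).trans
    (Finset.sum_le_sum fun z _ => (add_le_add_iff_left _).2 (hpiece z))

theorem exists_admissible_of_ae_existsUnique {ι : Type*} [Fintype ι] {s : ι → Set Plane}
    (hs : ∀ i, MeasurableSet (s i)) (hae : ∀ᵐ x ∂volume.restrict Om, ∃! i, x ∈ s i)
    {ξ : ι → Plane} (hξ : ∀ i, ξ i ∈ Om) :
    ∃ Z v T, Admissible lam Om Z v ∧ IsTransportMap Om Z v T ∧
      ∑ z ∈ Z, √(v z) ≤ ∑ i, √((volume (s i ∩ Om)).toReal) ∧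
      ∫ x in Om, ‖x - T x‖ ^ 2 = ∑ i, ∫ x in s i ∩ Om, ‖x - ξ i‖ ^ 2 := by
  classical
  have hfin : volume Om ≠ ⊤ := hvol ▸ ENNReal.ofReal_ne_top
  set m : ι → ℝ := fun i => (volume (s i ∩ Om)).toReal
  have hm : ∑ i, m i = Vlam lam := by
    change ∑ i, volume.real (s i ∩ Om) = _
    rw [← measureReal_eq_sum_of_ae_existsUnique hs hae hfin, measureReal_def, hvol,
      ENNReal.toReal_ofReal hV.le]
  have hmZ : ∀ i, m i ≠ 0 → volume (s i ∩ Om) ≠ 0 := fun i hi h => hi (by simp [m, h])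
  set Z := {i | volume (s i ∩ Om) ≠ 0}.toFinset.image ξ
  have hξZ : ∀ i, volume (s i ∩ Om) ≠ 0 → ξ i ∈ Z := fun i hi =>
    Finset.mem_image_of_mem ξ (mem_toFinset.2 hi)
  obtain ⟨i₀, -, hi₀⟩ := Finset.exists_ne_zero_of_sum_ne_zero (hm ▸ hV.ne')
  obtain ⟨T, hTm, hTZ, hTξ⟩ :=
    exists_measurable_ae_eq_of_ae_existsUnique hOm hs hae ξ ⟨_, hξZ i₀ (hmZ i₀ hi₀)⟩ hξZ
  set v : Plane → ℝ := fun z => (volume {x | x ∈ Om ∧ T x = z}).toReal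
  have hv : ∀ z, v z = ∑ i with ξ i = z, m i := measureReal_fiber_eq_sum hfin hs hae hTξ
  have hZOm : (Z : Set Plane) ⊆ Om := fun z hz => by
    obtain ⟨i, -, rfl⟩ := Finset.mem_image.1 hz
    exact hξ i
  have hvpos : ∀ z ∈ Z, 0 < v z := fun z hz => by
    obtain ⟨i, hi, rfl⟩ := Finset.mem_image.1 hz
    rw [hv]
    exact (ENNReal.toReal_pos (mem_toFinset.1 hi)
      (ne_top_of_le_ne_top hfin (measure_mono inter_subset_right))).trans_le
      (Finset.single_le_sum (f := m) (fun j _ => ENNReal.toReal_nonneg)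
        (Finset.mem_filter.2 ⟨Finset.mem_univ i, rfl⟩))
  have hvsum : ∑ z ∈ Z, v z = Vlam lam := by
    simp only [hv]
    rw [Finset.sum_fiberwise_eq_sum_filter,
      Finset.sum_filter_of_ne fun i _ hi => hξZ i (hmZ i hi), hm]
  refine ⟨Z, v, T, ⟨hZOm, hvpos, hvsum⟩, ⟨hTm, fun x _ => hTZ x, fun z _ => rfl⟩,
    (Finset.sum_congr rfl fun z _ => by rw [hv]).trans_le
      (sum_sqrt_sum_fiberwise_le_sum_sqrt Z ξ fun _ => ENNReal.toReal_nonneg), ?_⟩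
  rw [setIntegral_eq_sum_of_ae_existsUnique hs hae
    (integrableOn_norm_sub_sq hOm hb hfin hTm fun x _ => hZOm (hTZ x))]
  exact Finset.sum_congr rfl fun i _ => setIntegral_congr_ae ((hs i).inter hOm)
    ((hTξ i).mono fun x hx hxs => by rw [hx hxs])

theorem infEnergy_le_partitionEnergy {ι : Type*} [Fintype ι] {s : ι → Set Plane}
    (hs : ∀ i, MeasurableSet (s i)) (hae : ∀ᵐ x ∂volume.restrict Om, ∃! i, x ∈ s i) :
    infEnergy lam Om ≤ partitionEnergy Om s := by
  refine le_of_forall_pos_le_add fun ε hε => ?_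
  set δ := ε / (Fintype.card ι + 1)
  choose ξ hξOm hξ using fun i => exists_lt_inertia_add
    (nonempty_of_measure_ne_zero (hvol ▸ (ENNReal.ofReal_pos.2 hV).ne')) (s i ∩ Om)
    (show 0 < δ by positivity)
  obtain ⟨Z, v, T, hadm, hT, hsqrt, hcost⟩ :=
    exists_admissible_of_ae_existsUnique hOm hb hvol hV hs hae hξOm
  calc infEnergy lam Om ≤ energy Om Z v :=
        csInf_le ⟨0, fun _ ⟨_, _, _, he⟩ => he ▸ energy_nonneg _ _ _⟩ ⟨Z, v, hadm, rfl⟩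
    _ ≤ 2 * c6 * ∑ i, √((volume (s i ∩ Om)).toReal) + ∑ i, (inertia Om (s i ∩ Om) + δ) :=
        add_le_add (mul_le_mul_of_nonneg_left hsqrt (by have := c6_pos; positivity))
          ((transportCost_le hT).trans (hcost ▸ Finset.sum_le_sum fun i _ => (hξ i).le))
    _ = partitionEnergy Om s + Fintype.card ι * δ := by
        rw [partitionEnergy, Finset.sum_add_distrib, Finset.sum_add_distrib, Finset.mul_sum,
          Finset.sum_const, Finset.card_univ, nsmul_eq_mul]
        ring
    _ ≤ partitionEnergy Om s + ε := by
        gcongr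
        rw [mul_div_assoc', div_le_iff₀ (by positivity)]
        nlinarith

end Bounds

/-- **Equality of the two formulations.** For a bounded open `Ω` of unit area and `λ > 0`, the
infimum of `E_λ` over admissible atomic measures on `Ω_λ` equals the infimum of
`F_λ(𝝌) = Σᵢ [2c₆(∫ χᵢ)^(1/2) + inf_{ξ ∈ Ω_λ} ∫ |x − ξ|²χᵢ]` over finite measurable
partitions `𝝌` of `Ω_λ`. -/
theorem inf_energy_eq_inf_partition_energy
    (lam : ℝ) (hlam : 0 < lam)
    (Omega : Set Plane) (hopen : IsOpen Omega) (hbdd : Bornology.IsBounded Omega)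
    (harea : volume Omega = 1) :
    infEnergy lam (scaledDomain lam Omega) =
      sInf {e : ℝ | ∃ (n : ℕ) (s : Fin n → Set Plane),
        (∀ i, MeasurableSet (s i)) ∧
        (∀ᵐ x ∂(volume.restrict (scaledDomain lam Omega)), ∃! i, x ∈ s i) ∧
        e = ∑ i : Fin n,
          (2 * c6 * Real.sqrt ((volume (s i ∩ scaledDomain lam Omega)).toReal) +
            sInf {I : ℝ | ∃ xi ∈ scaledDomain lam Omega,
              I = ∫ x in s i ∩ scaledDomain lam Omega, ‖x - xi‖ ^ 2})} := by
  have hOm := (isOpen_scaledDomain hlam hopen).measurableSet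
  have hb := isBounded_scaledDomain lam hbdd
  have hvol := volume_scaledDomain hlam harea
  set Om := scaledDomain lam Omega
  have hV := Vlam_pos hlam
  obtain ⟨z, hz⟩ := nonempty_of_measure_ne_zero (hvol ▸ (ENNReal.ofReal_pos.2 hV).ne')
  change infEnergy lam Om = sInf (partitionEnergies Om)
  refine le_antisymm (le_csInf ⟨_, 1, fun _ => Om, fun _ => hOm, ?_, rfl⟩ ?_)
    (le_csInf ⟨_, {z}, fun _ => Vlam lam, ⟨by simpa using hz, by simpa using hV, by simp⟩, rfl⟩ ?_)
  · filter_upwards [ae_restrict_mem hOm] with x hx using ⟨0, hx, fun j _ => Subsingleton.elim j 0⟩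
  · rintro _ ⟨n, s, hs, hae, rfl⟩
    exact infEnergy_le_partitionEnergy hOm hb hvol hV hs hae
  · rintro _ ⟨Z, v, hadm, rfl⟩
    exact sInf_partitionEnergies_le_energy hOm hb hvol hV hadm
end
end
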